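/- Let m ≥ 4 be even and let q_1 ≥ q_2 ≥ ⋯ ≥ q_m with q_i ∈ ((√5 − 1)/2, 1/√2) for all i. Then Δ_{1:m} < Δ_{1:m−1}, where Δ_{1:k} = 2 − q_1 q_2 + Σ_{j=1}^{k−2} (−1)^j q_1⋯q_j (2 − q_{j+1} q_{j+2}) + (−1)^{k−1} q_1⋯q_{k−1}. -/
import Mathlib


/-- The closed-form expression
`Δ_{1:k} = 2 - q₁ q₂ + ∑_{j=1}^{k-2} (-1)^j q_1⋯q_j (2 - q_{j+1} q_{j+2})
  + (-1)^{k-1} q_1⋯q_{k-1}`. -/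
noncomputable def deltaOne (q : ℕ → ℝ) (k : ℕ) : ℝ :=
  2 - q 1 * q 2
    + ∑ j ∈ Finset.Icc 1 (k - 2),
        (-1 : ℝ) ^ j * (∏ i ∈ Finset.Icc 1 j, q i) * (2 - q (j + 1) * q (j + 2))
    + (-1 : ℝ) ^ (k - 1) * ∏ i ∈ Finset.Icc 1 (k - 1), q i

/-- For even `m ≥ 4` and `q 1 ≥ ⋯ ≥ q m` with all
`q i ∈ ((√5 - 1)/2, 1/√2)`, one has `Δ_{1:m} < Δ_{1:m-1}`. -/
theorem deltaOne_lt_of_even (m : ℕ) (hm : 4 ≤ m) (hme : Even m) (q : ℕ → ℝ)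
    (hmono : ∀ i j, 1 ≤ i → i ≤ j → j ≤ m → q j ≤ q i)
    (hq : ∀ i, 1 ≤ i → i ≤ m →
      q i ∈ Set.Ioo ((Real.sqrt 5 - 1) / 2) (1 / Real.sqrt 2)) :
    deltaOne q m < deltaOne q (m - 1) := by
  obtain ⟨n, rfl⟩ : ∃ n, m = n + 3 := ⟨m - 3, by omega⟩
  have hn : Odd n := by
    rcases hme with ⟨k, hk⟩; exact ⟨k - 2, by omega⟩
  have h5 : Real.sqrt 5 ^ 2 = 5 := Real.sq_sqrt (by norm_num)
  have hs5 : (2:ℝ) < Real.sqrt 5 := by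
    nlinarith [Real.sqrt_nonneg 5]
  have hφpos : (0:ℝ) < (Real.sqrt 5 - 1) / 2 := by linarith
  have hφ : ((Real.sqrt 5 - 1) / 2) ^ 2 + (Real.sqrt 5 - 1) / 2 = 1 := by
    nlinarith
  have hqpos : ∀ i, 1 ≤ i → i ≤ n + 3 → 0 < q i := fun i h1 h2 =>
    lt_trans hφpos (hq i h1 h2).1
  have hPpos : (0:ℝ) < ∏ i ∈ Finset.Icc 1 (n + 1), q i := by
    apply Finset.prod_pos
    intro i hi
    rw [Finset.mem_Icc] at hi
    exact hqpos i hi.1 (by omega)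
  have ha := (hq (n + 2) (by omega) (by omega)).1
  have hb := (hq (n + 3) (by omega) (by omega)).1
  have hkey : 1 < q (n + 2) + q (n + 2) * q (n + 3) := by nlinarith
  have e1 : n + 3 - 2 = n + 1 := by omega
  have e2 : n + 3 - 1 = n + 2 := by omega
  have e3 : n + 2 - 2 = n := by omega
  have e4 : n + 2 - 1 = n + 1 := by omega
  unfold deltaOne
  rw [e1, e2, e3, e4]
  rw [Finset.sum_Icc_succ_top (by omega : 1 ≤ n + 1)]
  rw [Finset.prod_Icc_succ_top (by omega : 1 ≤ n + 2)]
  have hev1 : ((-1 : ℝ)) ^ (n + 1) = 1 := (hn.add_one).neg_one_pow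
  have hev2 : ((-1 : ℝ)) ^ (n + 2) = -1 := by
    have : Odd (n + 2) := hn.add_even (by decide)
    exact this.neg_one_pow
  rw [hev1, hev2]
  have hP : (0:ℝ) < (∏ i ∈ Finset.Icc 1 (n + 1), q i) *
      (q (n + 2) + q (n + 2) * q (n + 3) - 1) :=
    mul_pos hPpos (by linarith)
  have f1 : n + 1 + 1 = n + 2 := rfl
  have f2 : n + 1 + 2 = n + 3 := rfl
  rw [f1, f2]
  nlinarith [hP]
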